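/- Stability of admissibility under weak limits: let y_n ∈ W^{1,2}([t,T];𝒢) be admissible curves on the junction with uniformly bounded L² derivatives, y_n → y uniformly on [t,T], and ẏ_n ⇀ α weakly in L²([t,T];ℝ^d). Then y ∈ W^{1,2}([t,T];𝒢) with ẏ = α, and for a.e. s, either y(s) = O and α(s) = 0, or y(s) ∈ J_i \ {O} for some i and α(s) is parallel to e_i; i.e., y is an admissible curve. -/

import Mathlib

/-!
Testing the weak convergence `ẏₙ ⇀ α` against `w · 𝟙_{(t,s]}` and passing to the limit in
`yₙ(s) = yₙ(t) + ∫ₜˢ ẏₙ` shows that the limit curve is the primitive of `α`; it stays in the closed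
set `𝒢`. By Lebesgue's differentiation theorem it then has derivative `α(s)` at almost every `s`.
Almost every point of the level set `{y = O}` is an accumulation point of that set (a subset of `ℝ`
has only countably many points isolated on the right), so the derivative vanishes there. Away from
`O` the junction coincides locally with a single half-line `ℝ⁺ eᵢ`, so the curve stays in `ℝ eᵢ`
near `s`, and so does its derivative.
-/

open Set MeasureTheory Filter
open scoped Topology InnerProductSpace

section HalfLine

variable {E : Type*} [NormedAddCommGroup E] [InnerProductSpace ℝ E]

def halfLine (v : E) : Set E := {p | ∃ r : ℝ, 0 ≤ r ∧ p = r • v}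

theorem halfLine_eq_image (v : E) : halfLine v = (fun r : ℝ => r • v) '' Ici 0 := by
  ext p
  simp only [halfLine, mem_ofPred_eq, mem_image, mem_Ici, eq_comm (a := p)]

theorem isClosed_halfLine (v : E) : IsClosed (halfLine v) := by
  rw [halfLine_eq_image]
  exact isClosedMap_smul_left v _ isClosed_Ici

theorem halfLine_subset_span (v : E) : halfLine v ⊆ Submodule.span ℝ {v} := by
  rintro p ⟨r, -, rfl⟩
  exact Submodule.smul_mem _ r (Submodule.mem_span_singleton_self v)

theorem eq_of_mem_halfLine_of_mem_halfLine {u v p : E} (hu : ‖u‖ = 1) (hv : ‖v‖ = 1)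
    (hpu : p ∈ halfLine u) (hpv : p ∈ halfLine v) (hp : p ≠ 0) : u = v := by
  obtain ⟨r, hr, rfl⟩ := hpu
  obtain ⟨r', hr', hrr'⟩ := hpv
  have hnorm : r = r' := by
    simpa [norm_smul, hu, hv, abs_of_nonneg hr, abs_of_nonneg hr'] using congrArg norm hrr'
  subst hnorm
  exact smul_right_injective E (by rintro rfl; simp at hp) hrr'

theorem eventually_mem_halfLine_of_mem_iUnion {ι : Type*} [Finite ι] {e : ι → E}
    (he : ∀ i, ‖e i‖ = 1) {i : ι} {p : E} (hp : p ∈ halfLine (e i)) (hp0 : p ≠ 0) :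
    ∀ᶠ q in 𝓝 p, q ∈ ⋃ j, halfLine (e j) → q ∈ halfLine (e i) := by
  have hK : IsClosed (⋃ j ∈ {j | e j ≠ e i}, halfLine (e j)) :=
    (toFinite _).isClosed_biUnion fun j _ => isClosed_halfLine (e j)
  have hpK : p ∉ ⋃ j ∈ {j | e j ≠ e i}, halfLine (e j) := by
    simp only [mem_iUnion, not_exists]
    exact fun j hj hpj => hj (eq_of_mem_halfLine_of_mem_halfLine (he j) (he i) hpj hp hp0)
  filter_upwards [hK.isOpen_compl.mem_nhds hpK] with q hqK hq
  obtain ⟨j, hqj⟩ := mem_iUnion.1 hq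
  by_contra hqi
  exact hqK (mem_biUnion (x := j) (fun hji => hqi (hji ▸ hqj)) hqj)

end HalfLine

section Derivative

variable {E : Type*} [NormedAddCommGroup E] [NormedSpace ℝ E]

theorem ae_accPt_of_mem (μ : Measure ℝ) [NullSingletonClass μ] (s : Set ℝ) :
    ∀ᵐ x ∂μ, x ∈ s → AccPt x (𝓟 s) := by
  have hcount : {x ∈ s | 𝓝[s ∩ Ioi x] x = ⊥}.Countable :=
    countable_setOfPred_isolated_right_within
  filter_upwards [hcount.measure_zero μ |> measure_eq_zero_iff_ae_notMem.1] with x hx hxs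
  rw [accPt_principal_iff_nhdsWithin]
  have : (𝓝[s ∩ Ioi x] x).NeBot := neBot_iff.2 fun h => hx ⟨hxs, h⟩
  exact this.mono (nhdsWithin_mono x fun y hy => ⟨hy.1, ne_of_gt hy.2⟩)

theorem HasDerivAt.eq_zero_of_accPt {f : ℝ → E} {f' : E} {x : ℝ} {s : Set ℝ}
    (hf : HasDerivAt f f' x) (hs : ∀ y ∈ s, f y = f x) (hx : AccPt x (𝓟 s)) : f' = 0 :=
  UniqueDiffWithinAt.eq_deriv s (uniqueDiffWithinAt_iff_accPt.2 hx) hf.hasDerivWithinAt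
    ((hasDerivWithinAt_const x s (f x)).congr hs rfl)

theorem ae_eq_zero_of_hasDerivAt_of_eq (μ : Measure ℝ) [NullSingletonClass μ] (f f' : ℝ → E)
    (c : E) :
    ∀ᵐ x ∂μ, HasDerivAt f (f' x) x → f x = c → f' x = 0 := by
  filter_upwards [ae_accPt_of_mem μ (f ⁻¹' {c})] with x hacc hf hx
  exact hf.eq_zero_of_accPt (fun y hy => hy.trans hx.symm) (hacc hx)

theorem HasDerivAt.mem_of_eventually_mem {f : ℝ → E} {f' : E} {x : ℝ} {K : Submodule ℝ E}
    (hK : IsClosed (K : Set E)) (hf : HasDerivAt f f' x) (hfK : ∀ᶠ y in 𝓝 x, f y ∈ K) :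
    f' ∈ K := by
  refine hK.mem_of_tendsto (hasDerivAt_iff_tendsto_slope.1 hf) ?_
  filter_upwards [nhdsWithin_le_nhds hfK] with y hy
  rw [slope_def_module]
  exact K.smul_mem _ (K.sub_mem hy hfK.self_of_nhds)

variable [CompleteSpace E]

theorem ae_hasDerivAt_of_eq_add_integral {f g : ℝ → E} {a b : ℝ}
    (hg : IntegrableOn g (Icc a b)) (hf : ∀ s ∈ Icc a b, f s = f a + ∫ τ in a..s, g τ) :
    ∀ᵐ s, s ∈ Ioo a b → HasDerivAt f (g s) s := by
  rcases lt_or_ge b a with hba | hab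
  · exact Eventually.of_forall fun s hs => absurd (hs.1.trans hs.2) hba.not_gt
  have hg' : IntervalIntegrable g volume a b :=
    (intervalIntegrable_iff_integrableOn_Icc_of_le hab).2 hg
  filter_upwards [hg'.ae_hasDerivAt_integral] with s hs hsab
  refine ((hs ?_ a ?_).const_add (f a)).congr_of_eventuallyEq ?_
  · rw [uIcc_of_le hab]; exact Ioo_subset_Icc_self hsab
  · rw [uIcc_of_le hab]; exact left_mem_Icc.2 hab
  · filter_upwards [Icc_mem_nhds hsab.1 hsab.2] with τ hτ using hf τ hτ

end Derivative

section WeakLimit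

variable {E : Type*} [NormedAddCommGroup E] [InnerProductSpace ℝ E] [CompleteSpace E]

theorem integral_inner_indicator_const {X : Type*} [MeasurableSpace X] {μ : Measure X}
    {h : X → E} (hh : Integrable h μ) {S : Set X} (hS : MeasurableSet S) (w : E) :
    ∫ x, ⟪h x, S.indicator (fun _ => w) x⟫_ℝ ∂μ = ⟪∫ x in S, h x ∂μ, w⟫_ℝ := by
  have hind : (fun x => ⟪h x, S.indicator (fun _ => w) x⟫_ℝ) =
      S.indicator fun x => ⟪w, h x⟫_ℝ := by
    ext x
    by_cases hx : x ∈ S <;> simp [hx, real_inner_comm]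
  rw [hind, integral_indicator hS, integral_inner hh.integrableOn, real_inner_comm]

theorem tendsto_inner_setIntegral_of_weakly {X : Type*} [MeasurableSpace X] {μ : Measure X}
    {f : ℕ → X → E} {g : X → E} (hf : ∀ n, Integrable (f n) μ) (hg : Integrable g μ)
    (hweak : ∀ φ : X → E, MemLp φ 2 μ →
      Tendsto (fun n => ∫ x, ⟪f n x, φ x⟫_ℝ ∂μ) atTop (𝓝 (∫ x, ⟪g x, φ x⟫_ℝ ∂μ)))
    {S : Set X} (hS : MeasurableSet S) (hμS : μ S ≠ ⊤) (w : E) :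
    Tendsto (fun n => ⟪∫ x in S, f n x ∂μ, w⟫_ℝ) atTop (𝓝 ⟪∫ x in S, g x ∂μ, w⟫_ℝ) := by
  have := hweak _ (memLp_indicator_const 2 hS w (Or.inr hμS))
  simpa only [integral_inner_indicator_const (hf _) hS, integral_inner_indicator_const hg hS]
    using this

theorem eq_add_integral_of_tendsto_of_weakly {a b : ℝ} {f f' : ℕ → ℝ → E} {F g : ℝ → E}
    (hf : ∀ n, ∀ s ∈ Icc a b, f n s = f n a + ∫ τ in a..s, f' n τ)
    (hF : ∀ s ∈ Icc a b, Tendsto (fun n => f n s) atTop (𝓝 (F s)))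
    (hf' : ∀ n, IntegrableOn (f' n) (Icc a b)) (hg : IntegrableOn g (Icc a b))
    (hweak : ∀ φ : ℝ → E, MemLp φ 2 (volume.restrict (Icc a b)) →
      Tendsto (fun n => ∫ τ in Icc a b, ⟪f' n τ, φ τ⟫_ℝ) atTop
        (𝓝 (∫ τ in Icc a b, ⟪g τ, φ τ⟫_ℝ)))
    {s : ℝ} (hs : s ∈ Icc a b) : F s = F a + ∫ τ in a..s, g τ := by
  have ha : a ∈ Icc a b := left_mem_Icc.2 (hs.1.trans hs.2)
  have hsub : Ioc a s ⊆ Icc a b := Ioc_subset_Icc_self.trans (Icc_subset_Icc_right hs.2)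
  rw [← sub_eq_iff_eq_add', intervalIntegral.integral_of_le hs.1]
  refine ext_inner_right ℝ fun w => tendsto_nhds_unique
    (((hF s hs).sub (hF a ha)).inner tendsto_const_nhds) ?_
  have hlim := tendsto_inner_setIntegral_of_weakly hf' hg hweak measurableSet_Ioc
    (by rw [Measure.restrict_apply measurableSet_Ioc, inter_eq_self_of_subset_left hsub]; simp) w
  simp only [Measure.restrict_restrict_of_subset hsub] at hlim
  refine hlim.congr fun n => ?_
  rw [← intervalIntegral.integral_of_le hs.1, hf n s hs, add_sub_cancel_left]

end WeakLimit

theorem stmt_9_general {d N : ℕ} (t T : ℝ)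
    (e : Fin (N + 1) → EuclideanSpace ℝ (Fin d))
    (he : ∀ i, ‖e i‖ = 1)
    (J : Fin (N + 1) → Set (EuclideanSpace ℝ (Fin d)))
    (hJ : ∀ i, J i = {p | ∃ r : ℝ, 0 ≤ r ∧ p = r • e i})
    (G : Set (EuclideanSpace ℝ (Fin d)))
    (hG : G = ⋃ i, J i)
    (y : ℕ → ℝ → EuclideanSpace ℝ (Fin d)) (ylim : ℝ → EuclideanSpace ℝ (Fin d))
    (α : ℝ → EuclideanSpace ℝ (Fin d))
    (hadm : ∀ n, ∀ s ∈ Icc t T,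
      (y n s = y n t + ∫ τ in t..s, deriv (y n) τ) ∧ y n s ∈ G)
    (hders : ∀ n, MemLp (deriv (y n)) 2 (volume.restrict (Icc t T)))
    (hunif : TendstoUniformlyOn y ylim atTop (Icc t T))
    (hαlim : MemLp α 2 (volume.restrict (Icc t T)))
    (hweak : ∀ g : ℝ → EuclideanSpace ℝ (Fin d), MemLp g 2 (volume.restrict (Icc t T)) →
      Tendsto (fun n => ∫ τ in Icc t T, (inner ℝ (deriv (y n) τ) (g τ) : ℝ)) atTop
        (nhds (∫ τ in Icc t T, (inner ℝ (α τ) (g τ) : ℝ)))) :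
    (∀ s ∈ Icc t T, (ylim s = ylim t + ∫ τ in t..s, α τ) ∧ ylim s ∈ G) ∧
    ∀ᵐ s ∂(volume.restrict (Icc t T)),
      (ylim s = 0 ∧ α s = 0) ∨
      ∃ i, ylim s ∈ J i \ {0} ∧ ∃ c : ℝ, α s = c • e i := by
  obtain rfl : J = fun i => halfLine (e i) := funext hJ
  subst hG
  have hα : IntegrableOn α (Icc t T) := hαlim.integrable one_le_two
  have hprim : ∀ s ∈ Icc t T, ylim s = ylim t + ∫ τ in t..s, α τ := fun s hs =>
    eq_add_integral_of_tendsto_of_weakly (fun n s hs => (hadm n s hs).1)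
      (fun s hs => hunif.tendsto_at hs) (fun n => (hders n).integrable one_le_two) hα hweak hs
  have hmem : ∀ s ∈ Icc t T, ylim s ∈ ⋃ i, halfLine (e i) := fun s hs =>
    (isClosed_iUnion_of_finite fun i => isClosed_halfLine (e i)).mem_of_tendsto
      (hunif.tendsto_at hs) (Eventually.of_forall fun n => (hadm n s hs).2)
  refine ⟨fun s hs => ⟨hprim s hs, hmem s hs⟩, ?_⟩
  rw [Measure.restrict_congr_set Ioo_ae_eq_Icc.symm, ae_restrict_iff' measurableSet_Ioo]
  filter_upwards [ae_hasDerivAt_of_eq_add_integral hα hprim,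
    ae_eq_zero_of_hasDerivAt_of_eq volume ylim α 0] with s hderiv hzero hs
  have hd := hderiv hs
  by_cases h0 : ylim s = 0
  · exact Or.inl ⟨h0, hzero hd h0⟩
  obtain ⟨i, hi⟩ := mem_iUnion.1 (hmem s (Ioo_subset_Icc_self hs))
  have hnear : ∀ᶠ τ in 𝓝 s, ylim τ ∈ Submodule.span ℝ {e i} := by
    filter_upwards [hd.continuousAt.eventually (eventually_mem_halfLine_of_mem_iUnion he hi h0),
      Icc_mem_nhds hs.1 hs.2] with τ hτ hτI
    exact halfLine_subset_span _ (hτ (hmem τ hτI))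
  obtain ⟨c, hc⟩ := Submodule.mem_span_singleton.1
    (hd.mem_of_eventually_mem (Submodule.closed_of_finiteDimensional _) hnear)
  exact Or.inr ⟨i, ⟨hi, h0⟩, c, hc.symm⟩

/-- Stability of admissibility under weak limits: uniform limits of admissible curves
with weakly converging derivatives are admissible curves. -/
theorem stmt_9 {d N : ℕ} (t T : ℝ) (htT : t < T)
    (e : Fin (N + 1) → EuclideanSpace ℝ (Fin d))
    (he : ∀ i, ‖e i‖ = 1) (hinj : Function.Injective e)
    (J : Fin (N + 1) → Set (EuclideanSpace ℝ (Fin d)))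
    (hJ : ∀ i, J i = {p | ∃ r : ℝ, 0 ≤ r ∧ p = r • e i})
    (G : Set (EuclideanSpace ℝ (Fin d)))
    (hG : G = ⋃ i, J i)
    (y : ℕ → ℝ → EuclideanSpace ℝ (Fin d)) (ylim : ℝ → EuclideanSpace ℝ (Fin d))
    (α : ℝ → EuclideanSpace ℝ (Fin d))
    (C : ℝ)
    (hadm : ∀ n, ∀ s ∈ Icc t T,
      (y n s = y n t + ∫ τ in t..s, deriv (y n) τ) ∧ y n s ∈ G)
    (hders : ∀ n, MemLp (deriv (y n)) 2 (volume.restrict (Icc t T)))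
    (hbd : ∀ n, (∫ τ in Icc t T, ‖deriv (y n) τ‖ ^ 2) ≤ C ^ 2)
    (hunif : TendstoUniformlyOn y ylim atTop (Icc t T))
    (hαlim : MemLp α 2 (volume.restrict (Icc t T)))
    (hweak : ∀ g : ℝ → EuclideanSpace ℝ (Fin d), MemLp g 2 (volume.restrict (Icc t T)) →
      Tendsto (fun n => ∫ τ in Icc t T, (inner ℝ (deriv (y n) τ) (g τ) : ℝ)) atTop
        (nhds (∫ τ in Icc t T, (inner ℝ (α τ) (g τ) : ℝ)))) :
    (∀ s ∈ Icc t T, (ylim s = ylim t + ∫ τ in t..s, α τ) ∧ ylim s ∈ G) ∧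
    ∀ᵐ s ∂(volume.restrict (Icc t T)),
      (ylim s = 0 ∧ α s = 0) ∨
      ∃ i, ylim s ∈ J i \ {0} ∧ ∃ c : ℝ, α s = c • e i :=
  stmt_9_general t T e he J hJ G hG y ylim α hadm hders hunif hαlim hweak
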